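/- arXiv:2007.12478 — 5 statements merged into one kernel-verified Lean document; each statement's English description precedes it below -/
import Mathlib

section
/- Let G be a finite group and let x be a nontrivial element of G such that for every y ∈ G, either x ∈ ⟨y⟩ or y ∈ ⟨x⟩. Then x is central in G. -/
theorem Commute.of_mem_zpowers {G : Type*} [Group G] {x y : G} (hx : x ∈ Subgroup.zpowers y) :
    Commute x y := by
  obtain ⟨k, rfl⟩ := hx
  exact (Commute.self_zpow y k).symm

theorem mem_center_of_comparable_cyclic_general
    {G : Type*} [Group G] (x : G)
    (h : ∀ y : G, x ∈ Subgroup.zpowers y ∨ y ∈ Subgroup.zpowers x) :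
    x ∈ Subgroup.center G := by
  refine Subgroup.mem_center_iff.mpr fun y => ?_
  rcases h y with hxy | hyx
  · exact (Commute.of_mem_zpowers hxy).symm.eq
  · exact (Commute.of_mem_zpowers hyx).eq

/-- If `x ≠ 1` in a finite group `G` and for every `y` either
`x ∈ ⟨y⟩` or `y ∈ ⟨x⟩`, then `x` is central. -/
theorem mem_center_of_comparable_cyclic
    {G : Type*} [Group G] [Finite G] (x : G) (hx : x ≠ 1)
    (h : ∀ y : G, x ∈ Subgroup.zpowers y ∨ y ∈ Subgroup.zpowers x) :
    x ∈ Subgroup.center G :=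
  mem_center_of_comparable_cyclic_general x h
end

section
/- Let G be a finite group and x a nontrivial element of G that does not generate G, such that for every y ∈ G, either x ∈ ⟨y⟩ or y ∈ ⟨x⟩. Then G has a unique minimal (i.e., unique subgroup of prime order) subgroup; in particular G is a p-group for some prime p. -/
/-!
If `y ∉ ⟨x⟩` then `⟨x⟩ < ⟨y⟩`, so some prime `r` occurs to a higher power in `orderOf y` than in
`orderOf x`. The `r`-part `z` of `y` then cannot lie in `⟨x⟩`, so `x ∈ ⟨z⟩` and `orderOf x` is a
power of `r`, say `p ^ k` with `k > 0` as `x ≠ 1`. An element of prime order either lies in `⟨x⟩`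
or generates a cyclic group of prime order containing `x`, which is then `⟨x⟩` itself; hence every
subgroup of prime order lies in the cyclic `p`-group `⟨x⟩`, which has exactly one subgroup of
order `p`. By Cauchy's theorem `p` is the only prime dividing `|G|`.
-/

open Subgroup

theorem Nat.exists_prime_factorization_lt_of_dvd_of_ne {n m : ℕ} (hm : m ≠ 0) (hnm : n ∣ m)
    (hne : n ≠ m) : ∃ r, r.Prime ∧ n.factorization r < m.factorization r := by
  have hn : n ≠ 0 := ne_zero_of_dvd_ne_zero hm hnm
  have hle := (Nat.factorization_le_iff_dvd hn hm).mpr hnm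
  by_contra! hge
  refine hne (Nat.eq_of_factorization_eq hn hm fun r => le_antisymm (hle r) ?_)
  by_cases hr : r.Prime
  · exact hge r hr
  · simp [Nat.factorization_eq_zero_of_not_prime _ hr]

section Finite

variable {G : Type*} [Group G] [Finite G]

theorem mem_zpowers_pow_orderOf_div {x z : G} {d : ℕ} (hd : d ∣ orderOf x)
    (hz : z ∈ zpowers x) (hzd : z ^ d = 1) : z ∈ zpowers (x ^ (orderOf x / d)) := by
  obtain ⟨t, rfl⟩ : ∃ t : ℕ, x ^ t = z := mem_powers_iff_mem_zpowers.mpr hz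
  obtain ⟨e, he⟩ := hd
  have hd0 : d ≠ 0 := by rintro rfl; simp [orderOf_pos x |>.ne'] at he
  have hdvd : d * e ∣ t * d := he ▸ orderOf_dvd_of_pow_eq_one (by rwa [← pow_mul] at hzd)
  obtain ⟨s, rfl⟩ : e ∣ t := by
    rw [mul_comm t] at hdvd
    exact Nat.dvd_of_mul_dvd_mul_left (Nat.pos_of_ne_zero hd0) hdvd
  rw [he, Nat.mul_div_cancel_left e (Nat.pos_of_ne_zero hd0), pow_mul]
  exact npow_mem_zpowers _ s

theorem zpowers_eq_of_mem_zpowers_of_orderOf_eq {x y : G} (hxy : x ∈ zpowers y)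
    (hord : orderOf x = orderOf y) : zpowers x = zpowers y :=
  Subgroup.eq_of_le_of_card_ge (zpowers_le.mpr hxy)
    (by rw [Nat.card_zpowers, Nat.card_zpowers, hord])

theorem Subgroup.eq_zpowers_pow_orderOf_div_card {x : G} {H : Subgroup G} (hH : H ≤ zpowers x) :
    H = zpowers (x ^ (orderOf x / Nat.card H)) := by
  have hdvd : Nat.card H ∣ orderOf x := Nat.card_zpowers x ▸ Subgroup.card_dvd_of_le hH
  refine Subgroup.eq_of_le_of_card_ge (fun g hg => ?_) ?_
  · exact mem_zpowers_pow_orderOf_div hdvd (hH hg)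
      (orderOf_dvd_iff_pow_eq_one.mp (H.orderOf_dvd_natCard hg))
  · rw [Nat.card_zpowers, orderOf_pow_orderOf_div (orderOf_pos x).ne' hdvd]

variable {x : G} (h : ∀ y : G, x ∈ zpowers y ∨ y ∈ zpowers x)
include h

theorem exists_orderOf_eq_prime_pow_of_comparable (hxG : zpowers x ≠ ⊤) :
    ∃ p k : ℕ, p.Prime ∧ orderOf x = p ^ k := by
  obtain ⟨y, hy⟩ : ∃ y, y ∉ zpowers x := by
    by_contra! hall
    exact hxG (eq_top_iff' _ |>.mpr hall)
  have hxy : x ∈ zpowers y := (h y).resolve_right hy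
  have hm : orderOf y ≠ 0 := (orderOf_pos y).ne'
  have hne : orderOf x ≠ orderOf y := fun heq =>
    hy (zpowers_eq_of_mem_zpowers_of_orderOf_eq hxy heq ▸ mem_zpowers y)
  obtain ⟨r, hr, hlt⟩ := Nat.exists_prime_factorization_lt_of_dvd_of_ne hm
    (orderOf_dvd_of_mem_zpowers hxy) hne
  set c := (orderOf y).factorization r
  have hz : orderOf (y ^ (orderOf y / r ^ c)) = r ^ c :=
    orderOf_pow_orderOf_div hm (Nat.ordProj_dvd _ r)
  have hzx : y ^ (orderOf y / r ^ c) ∉ zpowers x := fun hmem => by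
    have := hz ▸ orderOf_dvd_of_mem_zpowers hmem
    rw [hr.pow_dvd_iff_le_factorization (orderOf_pos x).ne'] at this
    omega
  obtain ⟨k, -, hk⟩ := (Nat.dvd_prime_pow hr).mp (hz ▸ orderOf_dvd_of_mem_zpowers
    ((h _).resolve_right hzx))
  exact ⟨r, k, hr, hk⟩

theorem mem_zpowers_of_orderOf_prime_of_comparable (hx : x ≠ 1) {z : G}
    (hz : (orderOf z).Prime) : z ∈ zpowers x := by
  refine (h z).elim (fun hxz => ?_) id
  have hxz' : orderOf x = orderOf z :=
    (Nat.dvd_prime hz).mp (orderOf_dvd_of_mem_zpowers hxz) |>.resolve_left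
      (mt orderOf_eq_one_iff.mp hx)
  exact zpowers_eq_of_mem_zpowers_of_orderOf_eq hxz hxz' ▸ mem_zpowers z

theorem le_zpowers_of_card_prime_of_comparable (hx : x ≠ 1) {H : Subgroup G}
    (hH : (Nat.card H).Prime) : H ≤ zpowers x := by
  intro g hg
  by_cases hg1 : g = 1
  · exact hg1 ▸ one_mem _
  refine mem_zpowers_of_orderOf_prime_of_comparable h hx ?_
  rwa [(Nat.dvd_prime hH).mp (H.orderOf_dvd_natCard hg) |>.resolve_left
    (mt orderOf_eq_one_iff.mp hg1)]

end Finite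

/-- If `x ≠ 1` does not generate the finite group `G` and for every
`y` either `x ∈ ⟨y⟩` or `y ∈ ⟨x⟩`, then `G` has a unique subgroup of prime order;
in particular `G` is a `p`-group for some prime `p`. -/
theorem unique_minimal_subgroup_of_comparable_cyclic
    {G : Type*} [Group G] [Finite G] (x : G) (hx : x ≠ 1)
    (hxG : Subgroup.zpowers x ≠ ⊤)
    (h : ∀ y : G, x ∈ Subgroup.zpowers y ∨ y ∈ Subgroup.zpowers x) :
    (∃! H : Subgroup G, ∃ q : ℕ, q.Prime ∧ Nat.card H = q) ∧
      ∃ p : ℕ, p.Prime ∧ IsPGroup p G := by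
  obtain ⟨p, k, hp, hxk⟩ := exists_orderOf_eq_prime_pow_of_comparable h hxG
  have hk : k ≠ 0 := by rintro rfl; exact hx (orderOf_eq_one_iff.mp (by simpa using hxk))
  have hcard : ∀ H : Subgroup G, (Nat.card H).Prime → Nat.card H = p := fun H hH =>
    (Nat.prime_dvd_prime_iff_eq hH hp).mp <| hH.dvd_of_dvd_pow <| hxk ▸ Nat.card_zpowers x ▸
      Subgroup.card_dvd_of_le (le_zpowers_of_card_prime_of_comparable h hx hH)
  have hW : Nat.card (zpowers (x ^ (orderOf x / p))) = p := by
    rw [Nat.card_zpowers, orderOf_pow_orderOf_div (orderOf_pos x).ne' (hxk ▸ dvd_pow_self p hk)]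
  refine ⟨⟨_, ⟨p, hp, hW⟩, fun H ⟨q, hq, hHq⟩ => ?_⟩, p, hp, ?_⟩
  · have hH : (Nat.card H).Prime := hHq ▸ hq
    rw [Subgroup.eq_zpowers_pow_orderOf_div_card
      (le_zpowers_of_card_prime_of_comparable h hx hH), hcard H hH]
  · refine (isPGroup_iff_primeFactors_card_subset hp.ne_zero).mpr fun q hq => ?_
    obtain ⟨hq, hqG, -⟩ := Nat.mem_primeFactors.mp hq
    have : Fact q.Prime := ⟨hq⟩
    obtain ⟨g, hg⟩ := exists_prime_orderOf_dvd_card' q hqG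
    rw [hp.primeFactors, Finset.mem_singleton, ← hg, ← Nat.card_zpowers]
    exact hcard _ (by rwa [Nat.card_zpowers, hg])
end

section
/- Let G be a finitely generated profinite group. Then the supremum of cardinalities of minimal topological generating sets of G is finite if and only if the Frattini subgroup of G has finite index in G. -/
/-- The Frattini subgroup of a profinite group: the intersection of all maximal
open subgroups. -/
def frattiniOpen (G : Type*) [Group G] [TopologicalSpace G] : Subgroup G :=
  sInf {M : Subgroup G | IsOpen (M : Set G) ∧ IsCoatom M}

/-!
If `Φ = frattiniOpen G` has finite index it is open, and then a set generates `G` topologically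
iff it generates `G` modulo `Φ`, because every proper closed subgroup lies in a maximal open one.
For a minimal generating set `Y`, the map `y ↦ ⟨Y \ {y}⟩Φ` is injective into the finitely many
subgroups containing `Φ`.

Conversely, with infinitely many maximal open subgroups we build sets `Y` minimal modulo open
normal subgroups `N` with `|Y|` unbounded: pick a maximal open `M ⊉ N`, move `Y` into `M`
modulo `N`, and add finitely many elements of `N` to get a set minimal modulo `N ⊓ M.normalCore`;
at least one element must be added since the moved set lies in `M`. Adding finitely many
further elements of `N` turns `Y` into a minimal topological generating set.
-/

open Set

section Minimal

variable {α : Type*} {P : Set α → Prop}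

theorem Minimal.image_and_injOn {f : α → α} (hf : ∀ X, P (f '' X) ↔ P X) {Y : Set α}
    (hY : Minimal P Y) : Minimal P (f '' Y) ∧ InjOn f Y := by
  refine ⟨⟨(hf Y).2 hY.1, fun Z hZ hZY => ?_⟩, fun y hy y' hy' hyy' => ?_⟩
  · have hZ_eq : f '' (Y ∩ f ⁻¹' Z) = Z := by
      rw [image_inter_preimage, inter_eq_right.2 hZY]
    have hYZ : Y ⊆ Y ∩ f ⁻¹' Z := hY.2 ((hf _).1 (by rwa [hZ_eq])) inter_subset_left
    exact hZ_eq ▸ image_mono hYZ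
  · by_contra hne
    have himage : f '' (Y \ {y}) = f '' Y := by
      refine (image_mono sdiff_subset).antisymm ?_
      rintro _ ⟨z, hz, rfl⟩
      by_cases hzy : z = y
      · exact ⟨y', ⟨hy', Ne.symm hne⟩, by rw [hzy, hyy']⟩
      · exact ⟨z, ⟨hz, hzy⟩, rfl⟩
    exact hY.notMem_of_prop_sdiff_singleton ((hf _).1 (by rw [himage]; exact (hf Y).2 hY.1)) hy

theorem exists_minimal_union_subset (hP : ∀ ⦃s t⦄, P t → t ⊆ s → P s) {Y T : Set α}
    (hT : T.Finite) (hYT : P (Y ∪ T)) (hY : ∀ y ∈ Y, ¬ P ((Y ∪ T) \ {y})) :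
    ∃ S ⊆ T, Minimal P (Y ∪ S) := by
  obtain ⟨S, ⟨hST, hYS⟩, hS_min⟩ :=
    (hT.finite_subsets.subset fun S hS => hS.1 : {S | S ⊆ T ∧ P (Y ∪ S)}.Finite).exists_minimal
      ⟨T, subset_rfl, hYT⟩
  refine ⟨S, hST, (Set.minimal_iff_forall_sdiff_singleton hP).2 ⟨hYS, fun x hx hPx => ?_⟩⟩
  by_cases hxS : x ∈ S
  · have hsub : (Y ∪ S) \ {x} ⊆ Y ∪ (S \ {x}) := by
      rintro z ⟨hz | hz, hzx⟩
      exacts [Or.inl hz, Or.inr ⟨hz, hzx⟩]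
    exact (hS_min ⟨sdiff_subset.trans hST, hP hPx hsub⟩ sdiff_subset hxS).2 rfl
  · exact hY x (hx.resolve_right hxS)
      (hP hPx (sdiff_subset_sdiff_left (union_subset_union_right Y hST)))

end Minimal

section GeneratesModulo

open Subgroup

variable {G : Type*} [Group G]

def GeneratesModulo (N : Subgroup G) (X : Set G) : Prop :=
  closure X ⊔ N = ⊤

variable {N : Subgroup G} {X Y : Set G}

theorem GeneratesModulo.of_subset_closure {F : Set G} (h : GeneratesModulo N F)
    (hF : F ⊆ closure X) : GeneratesModulo N X :=
  top_unique (h ▸ sup_le_sup_right ((closure_le _).2 hF) N)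

theorem GeneratesModulo.mono (h : GeneratesModulo N X) (hXY : X ⊆ Y) : GeneratesModulo N Y :=
  h.of_subset_closure (hXY.trans subset_closure)

theorem GeneratesModulo.of_le {N' : Subgroup G} (h : GeneratesModulo N' X) (hN : N' ≤ N) :
    GeneratesModulo N X :=
  top_unique (h ▸ sup_le_sup_left hN _)

theorem generatesModulo_union_iff {T : Set G} (hT : T ⊆ N) :
    GeneratesModulo N (X ∪ T) ↔ GeneratesModulo N X := by
  rw [GeneratesModulo, GeneratesModulo, Subgroup.closure_union, sup_assoc,
    sup_eq_right.2 ((closure_le N).2 hT)]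

theorem Minimal.notMem_of_generatesModulo (hY : Minimal (GeneratesModulo N) Y) {y : G}
    (hy : y ∈ Y) : y ∉ N := fun hyN =>
  have hgen := (generatesModulo_union_iff (singleton_subset_iff.2 hyN)).1
    (hY.1.mono (subset_sdiff_union Y {y}))
  hY.notMem_of_prop_sdiff_singleton hgen hy

theorem generatesModulo_image_iff {l : G → G} (hl : ∀ g, g⁻¹ * l g ∈ N) (X : Set G) :
    GeneratesModulo N (l '' X) ↔ GeneratesModulo N X := by
  have hle : closure (l '' X) ⊔ N ≤ closure X ⊔ N := by
    refine sup_le ((closure_le _).2 ?_) le_sup_right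
    rintro _ ⟨x, hx, rfl⟩
    simpa using mul_mem (mem_sup_left (subset_closure hx)) (mem_sup_right (hl x))
  have hge : closure X ⊔ N ≤ closure (l '' X) ⊔ N := by
    refine sup_le ((closure_le _).2 fun x hx => ?_) le_sup_right
    simpa using mul_mem (mem_sup_left (subset_closure (mem_image_of_mem l hx)))
      (mem_sup_right (inv_mem (hl x)))
  rw [GeneratesModulo, GeneratesModulo, hle.antisymm hge]

theorem exists_mem_inv_mul_mem_of_sup_eq_top [N.Normal] {M : Subgroup G} (h : M ⊔ N = ⊤)
    (g : G) : ∃ m ∈ M, g⁻¹ * m ∈ N := by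
  obtain ⟨m, hm, n, hn, rfl⟩ := mem_sup_of_normal_right.1 (h ▸ mem_top g : g ∈ M ⊔ N)
  exact ⟨m, hm, by simpa using inv_mem hn⟩

theorem exists_finite_generatesModulo (N : Subgroup G) [N.FiniteIndex] :
    ∃ F : Set G, F.Finite ∧ GeneratesModulo N F := by
  have := finite_quotient_of_finiteIndex (H := N)
  refine ⟨range fun q : G ⧸ N => q.out, finite_range _, eq_top_iff.2 fun g _ => ?_⟩
  obtain ⟨n, hn⟩ := QuotientGroup.mk_out_eq_mul N g
  have hout : (g : G ⧸ N).out ∈ closure (range fun q : G ⧸ N => q.out) := subset_closure ⟨_, rfl⟩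
  have := mul_mem (mem_sup_left hout : _ ∈ _ ⊔ N) (mem_sup_right (inv_mem n.2))
  simpa [hn] using this

theorem Minimal.exists_minimal_union_of_generatesModulo [N.Normal] {Q : Set G → Prop}
    (hQ_mono : ∀ ⦃s t⦄, Q t → t ⊆ s → Q s) (hQ : ∀ X, Q X → GeneratesModulo N X)
    (hY : Minimal (GeneratesModulo N) Y) {F : Set G} (hF : F.Finite)
    (hFQ : ∀ X, F ⊆ closure X → Q X) :
    ∃ S ⊆ (N : Set G), S.Finite ∧ Minimal Q (Y ∪ S) := by
  have hlift : ∀ f, ∃ n ∈ N, f * n⁻¹ ∈ closure Y := fun f => by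
    obtain ⟨c, hc, n, hn, rfl⟩ := mem_sup_of_normal_right.1 (hY.1 ▸ mem_top f : f ∈ closure Y ⊔ N)
    exact ⟨n, hn, by simpa using hc⟩
  choose n hnN hn using hlift
  have hYT : Q (Y ∪ n '' F) := hFQ _ fun f hf => by
    simpa using mul_mem (closure_mono subset_union_left (hn f))
      (subset_closure (Or.inr (mem_image_of_mem n hf)))
  have hTN : n '' F ⊆ N := image_subset_iff.2 fun f _ => hnN f
  have hsub : ∀ y, (Y ∪ n '' F) \ {y} ⊆ Y \ {y} ∪ n '' F := fun y =>
    union_sdiff_distrib.trans_subset (union_subset_union_right _ sdiff_subset)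
  obtain ⟨S, hST, hS⟩ := exists_minimal_union_subset hQ_mono (hF.image n) hYT fun y hy hQy =>
    hY.notMem_of_prop_sdiff_singleton
      ((generatesModulo_union_iff hTN).1 ((hQ _ hQy).mono (hsub y))) hy
  exact ⟨S, hST.trans hTN, (hF.image n).subset hST, hS⟩

theorem Subgroup.finite_setOf_le_of_finiteIndex (H : Subgroup G) [H.FiniteIndex] :
    {K : Subgroup G | H ≤ K}.Finite := by
  have := finite_quotient_of_finiteIndex (H := H)
  have hpre : ∀ K : Subgroup G, H ≤ K →
      QuotientGroup.mk ⁻¹' (QuotientGroup.mk '' (K : Set G) : Set (G ⧸ H)) = K := by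
    refine fun K hK => (subset_preimage_image _ _).antisymm' ?_
    rintro x ⟨k, hk, hkx⟩
    simpa using mul_mem hk (hK (QuotientGroup.eq.1 hkx))
  refine Finite.of_finite_image (f := fun K : Subgroup G => (QuotientGroup.mk '' (K : Set G) :
    Set (G ⧸ H))) (toFinite _) fun K₁ h₁ K₂ h₂ he => SetLike.coe_injective ?_
  rw [← hpre K₁ h₁, ← hpre K₂ h₂]
  exact congrArg _ he

theorem Minimal.ncard_le_of_generatesModulo [N.FiniteIndex]
    (hY : Minimal (GeneratesModulo N) Y) :
    Y.Finite ∧ Y.ncard ≤ {K : Subgroup G | N ≤ K}.ncard := by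
  have hinj : InjOn (fun y => closure (Y \ {y}) ⊔ N) Y := by
    intro y hy y' hy' he
    replace he : closure (Y \ {y}) ⊔ N = closure (Y \ {y'}) ⊔ N := he
    by_contra hne
    refine hY.notMem_of_prop_sdiff_singleton (top_unique (hY.1 ▸ sup_le ?_ le_sup_right)) hy
    refine (closure_le _).2 fun z hz => ?_
    by_cases hzy : z = y
    · rw [hzy, he]
      exact mem_sup_left (subset_closure ⟨hy, hne⟩)
    · exact mem_sup_left (subset_closure ⟨hz, hzy⟩)
  have hmaps : MapsTo (fun y => closure (Y \ {y}) ⊔ N) Y {K | N ≤ K} :=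
    fun _ _ => show N ≤ _ from le_sup_right
  exact ⟨(N.finite_setOf_le_of_finiteIndex.subset (image_subset_iff.2 hmaps)).of_finite_image hinj,
    ncard_le_ncard_of_injOn _ hmaps hinj N.finite_setOf_le_of_finiteIndex⟩

end GeneratesModulo

section Topological

variable {G : Type*} [Group G] [TopologicalSpace G]

theorem frattiniOpen_le {M : Subgroup G} (hM : IsOpen (M : Set G)) (hMc : IsCoatom M) :
    frattiniOpen G ≤ M :=
  sInf_le ⟨hM, hMc⟩

variable [IsTopologicalGroup G]

def TopologicallyGenerates (X : Set G) : Prop :=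
  (Subgroup.closure X).topologicalClosure = ⊤

variable {X : Set G}

theorem TopologicallyGenerates.of_subset_closure {F : Set G} (h : TopologicallyGenerates F)
    (hF : F ⊆ Subgroup.closure X) : TopologicallyGenerates X :=
  top_unique <| (Eq.symm h).trans_le <| Subgroup.topologicalClosure_mono <|
    (Subgroup.closure_le _).2 hF

theorem TopologicallyGenerates.mono {Y : Set G} (h : TopologicallyGenerates X) (hXY : X ⊆ Y) :
    TopologicallyGenerates Y :=
  h.of_subset_closure (hXY.trans Subgroup.subset_closure)

theorem TopologicallyGenerates.generatesModulo {N : Subgroup G} (hN : IsOpen (N : Set G))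
    (h : TopologicallyGenerates X) : GeneratesModulo N X :=
  top_unique <| (Eq.symm h).trans_le <| Subgroup.topologicalClosure_minimal _ le_sup_left <|
    Subgroup.isClosed_of_isOpen _ (Subgroup.isOpen_mono le_sup_right hN)

theorem isClosed_frattiniOpen : IsClosed (frattiniOpen G : Set G) := by
  rw [frattiniOpen, Subgroup.coe_sInf]
  exact isClosed_biInter fun M hM => Subgroup.isClosed_of_isOpen M hM.1

variable [CompactSpace G]

theorem Subgroup.finiteIndex_of_isOpen (H : Subgroup G) (hH : IsOpen (H : Set G)) :
    H.FiniteIndex :=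
  have := H.quotient_finite_of_isOpen hH
  Subgroup.finiteIndex_of_finite_quotient

theorem Subgroup.exists_isCoatom_isOpen_le_of_isOpen {U : Subgroup G} (hU : IsOpen (U : Set G))
    (hne : U ≠ ⊤) : ∃ M : Subgroup G, IsOpen (M : Set G) ∧ IsCoatom M ∧ U ≤ M := by
  have := U.finiteIndex_of_isOpen hU
  obtain ⟨M, -, ⟨hUM, hM⟩, hmax⟩ := (U.finite_setOf_le_of_finiteIndex.subset fun _ hK => hK.1 :
    {K : Subgroup G | U ≤ K ∧ K ≠ ⊤}.Finite).exists_le_maximal ⟨le_rfl, hne⟩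
  refine ⟨M, Subgroup.isOpen_mono hUM hU, ⟨hM, fun K hK => ?_⟩, hUM⟩
  by_contra hKt
  exact hK.not_ge (hmax ⟨hUM.trans hK.le, hKt⟩ hK.le)

theorem Subgroup.exists_isCoatom_isOpen_le_of_isClosed [TotallyDisconnectedSpace G]
    {C : Subgroup G} (hC : IsClosed (C : Set G)) (hne : C ≠ ⊤) :
    ∃ M : Subgroup G, IsOpen (M : Set G) ∧ IsCoatom M ∧ C ≤ M := by
  obtain ⟨U, ⟨hU, hCU⟩, hUne⟩ : ∃ U ∈ {U : Subgroup G | IsOpen (U : Set G) ∧ C ≤ U}, U ≠ ⊤ := by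
    by_contra! h
    exact hne ((ProfiniteGrp.closedSubgroup_eq_sInf_open ⟨C, hC⟩).trans (sInf_eq_top.2 h))
  obtain ⟨M, hM, hMc, hUM⟩ := exists_isCoatom_isOpen_le_of_isOpen hU hUne
  exact ⟨M, hM, hMc, hCU.trans hUM⟩

end Topological

section Profinite

variable {G : Type*} [Group G] [TopologicalSpace G] [IsTopologicalGroup G] [CompactSpace G]

theorem frattiniOpen_finiteIndex_of_finite
    (h : {M : Subgroup G | IsOpen (M : Set G) ∧ IsCoatom M}.Finite) :
    (frattiniOpen G).FiniteIndex := by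
  have := h.to_subtype
  rw [frattiniOpen, sInf_eq_iInf']
  exact Subgroup.finiteIndex_iInf fun M => M.1.finiteIndex_of_isOpen M.2.1

theorem GeneratesModulo.topologicallyGenerates [TotallyDisconnectedSpace G] {X : Set G}
    (h : GeneratesModulo (frattiniOpen G) X) : TopologicallyGenerates X := by
  by_contra hX
  obtain ⟨M, hM, hMc, hXM⟩ :=
    Subgroup.exists_isCoatom_isOpen_le_of_isClosed (Subgroup.isClosed_topologicalClosure _) hX
  exact hMc.1 <| top_unique <| (Eq.symm h).trans_le <|
    sup_le ((Subgroup.le_topologicalClosure _).trans hXM) (frattiniOpen_le hM hMc)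

theorem exists_bound_ncard_of_frattiniOpen_finiteIndex [TotallyDisconnectedSpace G]
    [(frattiniOpen G).FiniteIndex] :
    ∃ b : ℕ, ∀ Y : Set G, Minimal TopologicallyGenerates Y → Y.Finite ∧ Y.ncard ≤ b := by
  have hΦ := Subgroup.isOpen_of_isClosed_of_finiteIndex _ (isClosed_frattiniOpen (G := G))
  have hgen : TopologicallyGenerates = GeneratesModulo (frattiniOpen G) :=
    funext fun X => propext ⟨(·.generatesModulo hΦ), (·.topologicallyGenerates)⟩
  exact ⟨_, fun Y hY => (hgen ▸ hY).ncard_le_of_generatesModulo⟩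

theorem exists_minimal_generatesModulo_ncard_lt {N : Subgroup G} [N.Normal]
    (hN : IsOpen (N : Set G)) {Y : Set G} (hYfin : Y.Finite) (hY : Minimal (GeneratesModulo N) Y)
    {M : Subgroup G} (hM : IsOpen (M : Set G)) (hMc : IsCoatom M) (hNM : ¬ N ≤ M) :
    ∃ N' : Subgroup G, N'.Normal ∧ IsOpen (N' : Set G) ∧
      ∃ Y' : Set G, Y'.Finite ∧ Minimal (GeneratesModulo N') Y' ∧ Y.ncard < Y'.ncard := by
  have hMN : M ⊔ N = ⊤ := (hMc.le_iff.1 le_sup_left).resolve_right fun h => hNM (h ▸ le_sup_right)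
  choose l hlM hlN using exists_mem_inv_mul_mem_of_sup_eq_top hMN
  obtain ⟨hlY, hl_inj⟩ := hY.image_and_injOn (generatesModulo_image_iff hlN)
  have := M.finiteIndex_of_isOpen hM
  set N' := N ⊓ M.normalCore
  have hN' : IsOpen (N' : Set G) := hN.inter <| Subgroup.isOpen_of_isClosed_of_finiteIndex _ <|
    M.normalCore_isClosed (Subgroup.isClosed_of_isOpen M hM)
  have := N'.finiteIndex_of_isOpen hN'
  obtain ⟨F, hF, hNF⟩ := exists_finite_generatesModulo N'
  obtain ⟨S, hSN, hSfin, hS⟩ := hlY.exists_minimal_union_of_generatesModulo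
    (fun _ _ h hts => h.mono hts) (fun _ h => h.of_le inf_le_left) hF
    (fun _ hX => hNF.of_subset_closure hX)
  obtain ⟨s, hs⟩ : S.Nonempty := by
    rw [nonempty_iff_ne_empty]
    rintro rfl
    rw [union_empty] at hS
    refine hMc.1 <| top_unique <| (Eq.symm hS.1).trans_le <| sup_le ?_ ?_
    · exact (Subgroup.closure_le _).2 (image_subset_iff.2 fun y _ => hlM y)
    · exact inf_le_right.trans M.normalCore_le
  have hsY : s ∉ l '' Y := fun h => hlY.notMem_of_generatesModulo h (hSN hs)
  refine ⟨N', inferInstance, hN', l '' Y ∪ S, (hYfin.image l).union hSfin, hS, ?_⟩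
  calc Y.ncard = (l '' Y).ncard := hl_inj.ncard_image.symm
    _ < (l '' Y ∪ S).ncard :=
      ncard_lt_ncard (ssubset_of_subset_not_subset subset_union_left fun h => hsY (h (Or.inr hs)))
        ((hYfin.image l).union hSfin)

theorem exists_minimal_generatesModulo_le_ncard
    (hinf : {M : Subgroup G | IsOpen (M : Set G) ∧ IsCoatom M}.Infinite) (k : ℕ) :
    ∃ N : Subgroup G, N.Normal ∧ IsOpen (N : Set G) ∧
      ∃ Y : Set G, Y.Finite ∧ Minimal (GeneratesModulo N) Y ∧ k ≤ Y.ncard := by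
  induction k with
  | zero =>
    exact ⟨⊤, inferInstance, isOpen_univ, ∅, finite_empty,
      ⟨sup_top_eq _, fun _ _ _ => empty_subset _⟩, Nat.zero_le _⟩
  | succ k ih =>
    obtain ⟨N, _, hN, Y, hYfin, hY, hk⟩ := ih
    have := N.finiteIndex_of_isOpen hN
    obtain ⟨M, ⟨hM, hMc⟩, hNM⟩ := (hinf.sdiff N.finite_setOf_le_of_finiteIndex).nonempty
    obtain ⟨N', hN'n, hN', Y', hY'fin, hY', hlt⟩ :=
      exists_minimal_generatesModulo_ncard_lt hN hYfin hY hM hMc hNM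
    exact ⟨N', hN'n, hN', Y', hY'fin, hY', hk.trans_lt hlt⟩

theorem exists_minimal_topologicallyGenerates_lt_ncard {F : Set G} (hF : F.Finite)
    (hGF : TopologicallyGenerates F)
    (hinf : {M : Subgroup G | IsOpen (M : Set G) ∧ IsCoatom M}.Infinite) (b : ℕ) :
    ∃ Y : Set G, Minimal TopologicallyGenerates Y ∧ b < Y.ncard := by
  obtain ⟨N, _, hN, Y, hYfin, hY, hb⟩ := exists_minimal_generatesModulo_le_ncard hinf (b + 1)
  obtain ⟨S, -, hSfin, hS⟩ := hY.exists_minimal_union_of_generatesModulo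
    (fun _ _ h hts => h.mono hts) (fun _ h => h.generatesModulo hN) hF
    (fun _ hX => hGF.of_subset_closure hX)
  exact ⟨Y ∪ S, hS, hb.trans (ncard_le_ncard subset_union_left (hYfin.union hSfin))⟩

end Profinite

/-- For a finitely generated profinite group `G`, the supremum of
the cardinalities of minimal topological generating sets of `G` is finite iff the
Frattini subgroup of `G` has finite index. -/
theorem sup_minimal_generating_sets_finite_iff_frattini_finiteIndex
    {G : Type*} [Group G] [TopologicalSpace G] [IsTopologicalGroup G]
    [CompactSpace G] [TotallyDisconnectedSpace G]
    (hfg : ∃ S : Finset G, (Subgroup.closure (S : Set G)).topologicalClosure = ⊤) :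
    (∃ b : ℕ, ∀ Y : Set G,
        ((Subgroup.closure Y).topologicalClosure = ⊤ ∧
          ∀ Z ⊂ Y, (Subgroup.closure Z).topologicalClosure ≠ ⊤) →
        Y.Finite ∧ Y.ncard ≤ b) ↔
      (frattiniOpen G).FiniteIndex := by
  obtain ⟨F, hF⟩ := hfg
  have hmin (Y : Set G) : ((Subgroup.closure Y).topologicalClosure = ⊤ ∧
      ∀ Z ⊂ Y, (Subgroup.closure Z).topologicalClosure ≠ ⊤) ↔
      Minimal TopologicallyGenerates Y :=
    (minimal_iff_forall_lt (P := TopologicallyGenerates)).symm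
  simp only [hmin]
  refine ⟨fun ⟨b, hb⟩ => ?_, fun _ => exists_bound_ncard_of_frattiniOpen_finiteIndex⟩
  by_contra hΦ
  obtain ⟨Y, hY, hbY⟩ := exists_minimal_topologicallyGenerates_lt_ncard F.finite_toSet hF
    (fun h => hΦ (frattiniOpen_finiteIndex_of_finite h)) b
  exact (hb Y hY).2.not_gt hbY
end

section
/- Let G be a finitely generated profinite group and g ∈ G. Then g lies in no minimal topological generating set of G of size at least 2 if and only if either G is topologically generated by g alone or g belongs to the Frattini subgroup of G. -/
namespace Subgroup

section Group

variable {G : Type*} [Group G]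

theorem exists_finset_subset_of_mem_closure {s : Set G} {x : G} (hx : x ∈ closure s) :
    ∃ t : Finset G, (t : Set G) ⊆ s ∧ x ∈ closure (t : Set G) := by
  classical
  induction hx using closure_induction with
  | mem x hx => exact ⟨{x}, by simpa using hx, subset_closure (by simp)⟩
  | one => exact ⟨∅, by simp, one_mem _⟩
  | mul x y _ _ hx hy =>
    obtain ⟨t₁, ht₁, hx⟩ := hx
    obtain ⟨t₂, ht₂, hy⟩ := hy
    refine ⟨t₁ ∪ t₂, by simpa using ⟨ht₁, ht₂⟩, mul_mem ?_ ?_⟩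
    · exact closure_mono (by simp) hx
    · exact closure_mono (by simp) hy
  | inv x _ hx =>
    obtain ⟨t, ht, hx⟩ := hx
    exact ⟨t, ht, inv_mem hx⟩

theorem exists_finset_subset_of_closure_le {S : Finset G} {s : Set G}
    (h : closure (S : Set G) ≤ closure s) :
    ∃ t : Finset G, (t : Set G) ⊆ s ∧ closure (S : Set G) ≤ closure (t : Set G) := by
  classical
  rw [closure_le] at h
  induction S using Finset.induction_on with
  | empty => exact ⟨∅, by simp, by simp⟩
  | insert x S _ ih =>
    rw [Finset.coe_insert, Set.insert_subset_iff] at h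
    obtain ⟨t₁, ht₁, hx⟩ := exists_finset_subset_of_mem_closure h.1
    obtain ⟨t₂, ht₂, hS⟩ := ih h.2
    refine ⟨t₁ ∪ t₂, by simpa using ⟨ht₁, ht₂⟩, ?_⟩
    rw [Finset.coe_insert, closure_le, Set.insert_subset_iff]
    exact ⟨closure_mono (by simp) hx, (closure_le _).mp (hS.trans (closure_mono (by simp)))⟩

theorem exists_isCoatom_ge_of_finiteIndex {K : Subgroup G} [K.FiniteIndex] (hK : K ≠ ⊤) :
    ∃ M : Subgroup G, IsCoatom M ∧ K ≤ M := by
  induction h : K.index using Nat.strong_induction_on generalizing K with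
  | _ n ih =>
  by_cases hKM : IsCoatom K
  · exact ⟨K, hKM, le_rfl⟩
  obtain ⟨L, hKL, hL⟩ : ∃ L, K < L ∧ L ≠ ⊤ := by simpa [IsCoatom, hK] using hKM
  have : L.FiniteIndex := finiteIndex_of_le hKL.le
  obtain ⟨M, hM, hLM⟩ := ih _ (h ▸ index_strictAnti hKL) hL rfl
  exact ⟨M, hM, hKL.le.trans hLM⟩

end Group

section TopologicalGroup

variable {G : Type*} [Group G] [TopologicalSpace G] [IsTopologicalGroup G]

theorem topologicalClosure_closure_ne_top_of_subset {s : Set G} {M : Subgroup G}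
    (hM : IsClosed (M : Set G)) (hMtop : M ≠ ⊤) (hs : s ⊆ M) :
    (closure s).topologicalClosure ≠ ⊤ := fun h =>
  hMtop (top_le_iff.mp (h ▸ topologicalClosure_minimal _ ((closure_le M).mpr hs) hM))

theorem exists_finset_subset_topologicalClosure_closure_eq_top
    (hfg : ∃ S : Finset G, (closure (S : Set G)).topologicalClosure = ⊤) {s : Set G}
    (hs : closure s = ⊤) :
    ∃ t : Finset G, (t : Set G) ⊆ s ∧ (closure (t : Set G)).topologicalClosure = ⊤ := by
  obtain ⟨S, hS⟩ := hfg
  obtain ⟨t, hts, hSt⟩ := exists_finset_subset_of_closure_le (S := S) (hs ▸ le_top)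
  exact ⟨t, hts, top_le_iff.mp (hS ▸ topologicalClosure_mono hSt)⟩

theorem exists_minimal_generating_finset_mem_of_notMem_isCoatom
    (hfg : ∃ S : Finset G, (closure (S : Set G)).topologicalClosure = ⊤)
    {M : Subgroup G} (hMc : IsClosed (M : Set G)) (hM : IsCoatom M) {g : G} (hgM : g ∉ M)
    (hg : (zpowers g).topologicalClosure ≠ ⊤) :
    ∃ Y : Finset G, g ∈ Y ∧ 2 ≤ Y.card ∧
      (closure (Y : Set G)).topologicalClosure = ⊤ ∧
      ∀ Z : Finset G, Z ⊂ Y → (closure (Z : Set G)).topologicalClosure ≠ ⊤ := by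
  have hMg : closure (insert g (M : Set G)) = ⊤ := by
    refine hM.2 _ (lt_of_le_of_ne ?_ fun h => hgM ?_)
    · exact fun x hx => subset_closure (Set.mem_insert_of_mem g hx)
    · exact h ▸ subset_closure (Set.mem_insert g _)
  obtain ⟨t, htM, ht⟩ := exists_finset_subset_topologicalClosure_closure_eq_top hfg hMg
  obtain ⟨Y, hYt, hY⟩ := exists_minimal_le_of_wellFoundedLT
    (fun Y : Finset G => (closure (Y : Set G)).topologicalClosure = ⊤) t ht
  have hgY : g ∈ Y := by
    by_contra hgY
    refine topologicalClosure_closure_ne_top_of_subset hMc hM.1 (fun y hy => ?_) hY.prop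
    exact (htM (hYt hy)).resolve_left (ne_of_mem_of_not_mem hy hgY)
  have hYg : Y ≠ {g} := by
    rintro rfl
    exact hg (by simpa [zpowers_eq_closure] using hY.prop)
  refine ⟨Y, hgY, ?_, hY.prop, fun Z hZ => hY.not_prop_of_lt hZ⟩
  exact Finset.one_lt_card_iff_nontrivial.mpr
    ((Finset.nontrivial_iff_ne_singleton hgY).mpr hYg)

end TopologicalGroup

section Profinite

variable {G : Type*} [Group G] [TopologicalSpace G] [IsTopologicalGroup G]
  [CompactSpace G] [TotallyDisconnectedSpace G]

theorem exists_isOpen_isCoatom_superset_of_topologicalClosure_ne_top {s : Set G}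
    (hs : (closure s).topologicalClosure ≠ ⊤) :
    ∃ M : Subgroup G, IsOpen (M : Set G) ∧ IsCoatom M ∧ s ⊆ M := by
  set H := (closure s).topologicalClosure
  obtain ⟨N, hNo, hHN, hN⟩ :
      ∃ N : Subgroup G, IsOpen (N : Set G) ∧ H ≤ N ∧ N ≠ ⊤ := by
    by_contra! h
    have hH := ProfiniteGrp.closedSubgroup_eq_sInf_open ⟨H, isClosed_topologicalClosure _⟩
    exact hs (hH.trans (sInf_eq_top.mpr fun N hN => h N hN.1 hN.2))
  have : N.FiniteIndex :=
    have := quotient_finite_of_isOpen N hNo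
    finiteIndex_of_finite_quotient
  obtain ⟨M, hM, hNM⟩ := exists_isCoatom_ge_of_finiteIndex hN
  refine ⟨M, isOpen_mono hNM hNo, hM, fun x hx => hNM (hHN ?_)⟩
  exact le_topologicalClosure _ (subset_closure hx)

theorem topologicalClosure_closure_eq_top_of_insert_of_mem_frattiniOpen {g : G} {s : Set G}
    (hg : g ∈ frattiniOpen G) (hgen : (closure (insert g s)).topologicalClosure = ⊤) :
    (closure s).topologicalClosure = ⊤ := by
  by_contra hs
  obtain ⟨M, hMo, hM, hsM⟩ := exists_isOpen_isCoatom_superset_of_topologicalClosure_ne_top hs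
  have hgM : g ∈ M := mem_sInf.mp hg M ⟨hMo, hM⟩
  exact topologicalClosure_closure_ne_top_of_subset (isClosed_of_isOpen M hMo) hM.1
    (Set.insert_subset hgM hsM) hgen

end Profinite

end Subgroup

/-- In a finitely generated profinite group, `g` lies in no minimal
topological generating set of size at least 2 iff `g` topologically generates `G` or
`g` lies in the Frattini subgroup of `G`. -/
theorem isolated_in_independence_graph_iff
    {G : Type*} [Group G] [TopologicalSpace G] [IsTopologicalGroup G]
    [CompactSpace G] [TotallyDisconnectedSpace G]
    (hfg : ∃ S : Finset G, (Subgroup.closure (S : Set G)).topologicalClosure = ⊤)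
    (g : G) :
    (¬ ∃ Y : Finset G, g ∈ Y ∧ 2 ≤ Y.card ∧
        (Subgroup.closure (Y : Set G)).topologicalClosure = ⊤ ∧
        ∀ Z : Finset G, Z ⊂ Y → (Subgroup.closure (Z : Set G)).topologicalClosure ≠ ⊤) ↔
      ((Subgroup.zpowers g).topologicalClosure = ⊤ ∨ g ∈ frattiniOpen G) := by
  classical
  constructor
  · intro hno
    by_contra! h
    obtain ⟨M, hMo, hM, hgM⟩ :
        ∃ M : Subgroup G, IsOpen (M : Set G) ∧ IsCoatom M ∧ g ∉ M := by
      simpa [frattiniOpen, Subgroup.mem_sInf] using h.2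
    exact hno (Subgroup.exists_minimal_generating_finset_mem_of_notMem_isCoatom hfg
      (M.isClosed_of_isOpen hMo) hM hgM h.1)
  · rintro (hg | hg) ⟨Y, hgY, hcard, hY, hmin⟩
    · refine hmin {g} (Finset.ssubset_iff_subset_ne.mpr ⟨by simpa using hgY, ?_⟩) ?_
      · rintro rfl
        simp at hcard
      · simpa [Subgroup.zpowers_eq_closure] using hg
    · refine hmin _ (Finset.erase_ssubset hgY)
        (Subgroup.topologicalClosure_closure_eq_top_of_insert_of_mem_frattiniOpen hg ?_)
      rwa [← Finset.coe_insert, Finset.insert_erase hgY]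
end

section
/- Let G be a finite group and g ∈ G. Then g lies in no minimal generating set of G of size at least 2 if and only if either G = ⟨g⟩ or g belongs to the Frattini subgroup Φ(G). -/
/-!
If `g ∈ Φ(G)`, deleting `g` from a generating set leaves a generating set, and if `G = ⟨g⟩`
then `{g}` already generates; either way `g` lies in no minimal generating set of size `≥ 2`.
Conversely, if `g` avoids a maximal subgroup `M`, then `M ∪ {g}` generates `G` while `M` does
not; shrinking `M` to a minimal `T ⊆ M` for which `T ∪ {g}` still generates gives a minimal
generating set `T ∪ {g}` (dropping `g` leaves a subset of `M`), of size `≥ 2` unless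
`⟨g⟩ = G`.
-/

open Subgroup

namespace Finset

variable {α : Type*} [DecidableEq α] {P : Finset α → Prop}

theorem exists_subset_minimal_insert (hP : ∀ ⦃s t⦄, P t → t ⊆ s → P s) {a : α}
    {S : Finset α} (hS : ¬P S) (haS : P (insert a S)) :
    ∃ T ⊆ S, a ∉ T ∧ Minimal P (insert a T) := by
  obtain ⟨T, hTS, hT⟩ := exists_minimal_le_of_wellFoundedLT (fun T => P (insert a T)) S haS
  have haT : a ∉ T := fun haT => hS (hP (by simpa [insert_eq_of_mem haT] using hT.prop) hTS)
  refine ⟨T, hTS, haT, (minimal_iff_forall_erase hP).mpr ⟨hT.prop, fun x hx => ?_⟩⟩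
  rcases mem_insert.mp hx with rfl | hxT
  · rw [erase_insert haT]
    exact fun hPT => hS (hP hPT hTS)
  · rw [erase_insert_of_ne (hxT.ne_of_notMem haT).symm]
    exact hT.not_prop_of_lt (erase_ssubset hxT)

end Finset

section Generation

variable {G : Type*} [Group G]

theorem closure_coe_eq_top_of_subset {s t : Finset G} (ht : closure (t : Set G) = ⊤)
    (hts : t ⊆ s) : closure (s : Set G) = ⊤ :=
  top_le_iff.mp (ht ▸ closure_mono (Finset.coe_subset.mpr hts))

theorem exists_isCoatom_notMem_of_notMem_frattini {g : G} (hg : g ∉ frattini G) :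
    ∃ M : Subgroup G, IsCoatom M ∧ g ∉ M := by
  simpa [frattini, Order.radical, mem_iInf] using hg

theorem eq_singleton_of_minimal_closure_eq_top {g : G} (hg : zpowers g = ⊤) {Y : Finset G}
    (hY : Minimal (fun Y : Finset G => closure (Y : Set G) = ⊤) Y) (hgY : g ∈ Y) : Y = {g} :=
  hY.eq_of_ge (by simpa [← zpowers_eq_closure] using hg) (Finset.singleton_subset_iff.mpr hgY)

theorem notMem_of_mem_frattini [IsCoatomic (Subgroup G)] {g : G} (hg : g ∈ frattini G)
    {Y : Finset G} (hY : Minimal (fun Y : Finset G => closure (Y : Set G) = ⊤) Y) : g ∉ Y := by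
  classical
  intro hgY
  refine ((Finset.minimal_iff_forall_erase fun _ _ => closure_coe_eq_top_of_subset).mp hY).2
    g hgY ?_
  apply frattini_nongenerating
  rw [eq_top_iff, ← hY.prop, closure_le]
  intro y hy
  rcases eq_or_ne y g with rfl | hyg
  · exact mem_sup_right hg
  · exact mem_sup_left (subset_closure (Finset.mem_erase.mpr ⟨hyg, hy⟩))

theorem exists_minimal_insert_of_notMem_frattini [Finite G] [DecidableEq G] {g : G}
    (hg : g ∉ frattini G) :
    ∃ T : Finset G, g ∉ T ∧
      Minimal (fun Y : Finset G => closure (Y : Set G) = ⊤) (insert g T) := by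
  obtain ⟨M, hM, hgM⟩ := exists_isCoatom_notMem_of_notMem_frattini hg
  let S := (Set.toFinite (M : Set G)).toFinset
  have hS : closure (S : Set G) = M := by simp [S]
  have hgS : closure ((insert g S : Finset G) : Set G) = ⊤ := by
    refine hM.2 _ (lt_of_le_of_ne ?_ fun hEq => hgM ?_)
    · exact hS ▸ closure_mono (Finset.coe_subset.mpr (Finset.subset_insert g S))
    · exact hEq ▸ Subgroup.subset_closure (Finset.mem_insert_self g S)
  obtain ⟨T, -, hgT, hT⟩ := Finset.exists_subset_minimal_insert
    (P := fun Y : Finset G => closure (Y : Set G) = ⊤)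
    (fun _ _ => closure_coe_eq_top_of_subset) (hS ▸ hM.1) hgS
  exact ⟨T, hgT, hT⟩

end Generation

/-- In a finite group `G`, `g` lies in no minimal generating set of
size at least 2 iff `G = ⟨g⟩` or `g ∈ Φ(G)`. -/
theorem isolated_in_independence_graph_iff_finite
    {G : Type*} [Group G] [Finite G] (g : G) :
    (¬ ∃ Y : Finset G, g ∈ Y ∧ 2 ≤ Y.card ∧
        Subgroup.closure (Y : Set G) = ⊤ ∧
        ∀ Z : Finset G, Z ⊂ Y → Subgroup.closure (Z : Set G) ≠ ⊤) ↔
      (Subgroup.zpowers g = ⊤ ∨ g ∈ frattini G) := by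
  classical
  constructor
  · intro hisolated
    by_contra! h
    obtain ⟨T, hgT, hT⟩ := exists_minimal_insert_of_notMem_frattini h.2
    have hT_ne : T.Nonempty := by
      rw [Finset.nonempty_iff_ne_empty]
      rintro rfl
      exact h.1 (by simpa [zpowers_eq_closure] using hT.prop)
    refine hisolated ⟨insert g T, Finset.mem_insert_self g T, ?_, minimal_iff_forall_lt.mp hT⟩
    rw [Finset.card_insert_of_notMem hgT]
    exact Nat.succ_le_succ hT_ne.card_pos
  · rintro hg ⟨Y, hgY, hcard, hY⟩
    have hmin :=
      minimal_iff_forall_lt (P := fun Y : Finset G => closure (Y : Set G) = ⊤) |>.mpr hY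
    rcases hg with hg | hg
    · rw [eq_singleton_of_minimal_closure_eq_top hg hmin hgY, Finset.card_singleton] at hcard
      omega
    · exact notMem_of_mem_frattini hg hmin hgY
end
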